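/- arXiv:2501.11989 — 2 statements merged into one kernel-verified Lean document; each statement's English description precedes it below -/
import Mathlib

section
/- Let $n \ge 1$ be a natural number and $\alpha \in (0,n)$. Then for any compact set $K \subseteq \mathbb{R}^n$ and any $x \in \mathbb{R}^n$, one has $\int_K |x-y|^{\alpha-n}\,dy \le \alpha^{-1}\,\omega_{n-1}\,(|K|/\nu_n)^{\alpha/n}$, where $\nu_n$ is the Lebesgue measure of the unit ball in $\mathbb{R}^n$ and $\omega_{n-1} = n\nu_n$ is its surface measure. -/
/-!
The kernel `‖z‖ ^ (α - d)` is radially decreasing, so by the bathtub principle its integral over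
a set `S` is at most its integral over the ball centred at the singularity with the same measure
as `S`. That ball has radius `r = (|S| / ν)^(1/d)`, and in polar coordinates its integral is
`d ν ∫₀ʳ t^(α-1) dt = d ν r^α / α`.
-/

open MeasureTheory Set Metric Module
open scoped ENNReal

section Bathtub

variable {X : Type*} [MeasurableSpace X] {μ : Measure X}

theorem setLIntegral_le_setLIntegral_of_measure_eq {f : X → ℝ≥0∞} {s t : Set X} (c : ℝ≥0∞)
    (hs : MeasurableSet s) (ht : MeasurableSet t) (hst : μ s = μ t) (hs_fin : μ s ≠ ∞)
    (hf_le : ∀ x ∈ s \ t, f x ≤ c) (hf_ge : ∀ᵐ x ∂μ, x ∈ t \ s → c ≤ f x) :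
    ∫⁻ x in s, f x ∂μ ≤ ∫⁻ x in t, f x ∂μ := by
  have hdiff : μ (s \ t) = μ (t \ s) := measure_sdiff_symm hs.nullMeasurableSet
    ht.nullMeasurableSet hst (measure_ne_top_of_subset inter_subset_left hs_fin)
  calc ∫⁻ x in s, f x ∂μ = ∫⁻ x in s ∩ t, f x ∂μ + ∫⁻ x in s \ t, f x ∂μ :=
        (lintegral_inter_add_sdiff f s ht).symm
    _ ≤ ∫⁻ x in s ∩ t, f x ∂μ + ∫⁻ _ in t \ s, c ∂μ := by
        refine add_le_add_right ?_ _
        rw [setLIntegral_const, ← hdiff, ← setLIntegral_const]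
        exact setLIntegral_mono measurable_const hf_le
    _ ≤ ∫⁻ x in t ∩ s, f x ∂μ + ∫⁻ x in t \ s, f x ∂μ := by
        rw [inter_comm]
        exact add_le_add_right (setLIntegral_mono_ae' (ht.diff hs) hf_ge) _
    _ = ∫⁻ x in t, f x ∂μ := lintegral_inter_add_sdiff f t hs

end Bathtub

variable {E : Type*} [NormedAddCommGroup E] [NormedSpace ℝ E] [FiniteDimensional ℝ E]
  [MeasurableSpace E] [BorelSpace E] [Nontrivial E] (μ : Measure E) [μ.IsAddHaarMeasure]

theorem integral_ball_norm_rpow {α : ℝ} (hα : 0 < α) {r : ℝ} (hr : 0 ≤ r) :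
    ∫ z in ball (0 : E) r, ‖z‖ ^ (α - finrank ℝ E) ∂μ =
      finrank ℝ E * μ.real (ball 0 1) * (r ^ α / α) := by
  have hradial : ∫ y in Ioi (0 : ℝ), y ^ (finrank ℝ E - 1) * (Iio r).indicator
      (fun t ↦ t ^ (α - finrank ℝ E)) y = ∫ y in (0)..r, y ^ (α - 1) := by
    simp_rw [← indicator_mul_right (Iio r) fun y : ℝ ↦ y ^ (finrank ℝ E - 1)]
    rw [setIntegral_indicator measurableSet_Iio, Ioi_inter_Iio, intervalIntegral.integral_of_le hr,
      integral_Ioc_eq_integral_Ioo]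
    refine setIntegral_congr_fun measurableSet_Ioo fun y hy ↦ ?_
    rw [← Real.rpow_natCast, ← Real.rpow_add hy.1, Nat.cast_sub finrank_pos]
    ring_nf
  calc ∫ z in ball (0 : E) r, ‖z‖ ^ (α - finrank ℝ E) ∂μ
      = ∫ z, (Iio r).indicator (fun t ↦ t ^ (α - finrank ℝ E)) ‖z‖ ∂μ := by
        rw [← integral_indicator measurableSet_ball]
        congr 1 with z
        simp [indicator]
    _ = finrank ℝ E * μ.real (ball 0 1) * ∫ y in (0)..r, y ^ (α - 1) := by
        rw [integral_fun_norm_addHaar, ← hradial]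
        simp only [nsmul_eq_mul, smul_eq_mul, mul_assoc]
    _ = _ := by
        rw [integral_rpow (Or.inl (by linarith)), sub_add_cancel, Real.zero_rpow hα.ne', sub_zero]

theorem integrableOn_ball_norm_rpow {α : ℝ} (hα : 0 < α) (r : ℝ) :
    IntegrableOn (fun z : E ↦ ‖z‖ ^ (α - finrank ℝ E)) (ball 0 r) μ := by
  refine integrableOn_ball_of_norm_le_rpow (C := 1) (α := finrank ℝ E - α) finrank_pos
    (by linarith) (ae_of_all _ fun z ↦ ?_) (measurable_norm.pow_const _).aestronglyMeasurable
  rw [one_mul, neg_sub, Real.norm_of_nonneg (by positivity)]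

theorem setIntegral_norm_rpow_le {α : ℝ} (hα : 0 < α) (hαd : α ≤ finrank ℝ E) {S : Set E}
    (hS : MeasurableSet S) (hS_fin : μ S ≠ ∞) :
    ∫ z in S, ‖z‖ ^ (α - finrank ℝ E) ∂μ ≤
      α⁻¹ * (finrank ℝ E * μ.real (ball 0 1)) *
        (μ.real S / μ.real (ball 0 1)) ^ (α / finrank ℝ E) := by
  set d : ℕ := finrank ℝ E
  set ν := μ.real (ball (0 : E) 1)
  have hν : 0 < ν := ENNReal.toReal_pos (measure_ball_pos μ 0 one_pos).ne' measure_ball_lt_top.ne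
  rcases eq_or_ne (μ S) 0 with hS0 | hS0
  · rw [setIntegral_measure_zero _ hS0]
    positivity
  set r := (μ.real S / ν) ^ (d : ℝ)⁻¹
  have hr : 0 < r := by
    have : 0 < μ.real S := ENNReal.toReal_pos hS0 hS_fin
    positivity
  have hball : μ (ball 0 r) = μ S := by
    rw [← measureReal_eq_measureReal_iff, ← Measure.addHaar_real_closedBall_eq_addHaar_real_ball,
      Measure.addHaar_real_closedBall μ 0 hr.le,
      Real.rpow_inv_natCast_pow (by positivity) finrank_pos.ne', div_mul_cancel₀ _ hν.ne']
  have hmeas : Measurable fun z : E ↦ ‖z‖ ^ (α - d) := measurable_norm.pow_const _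
  have hmono : ∫⁻ z in S, ENNReal.ofReal (‖z‖ ^ (α - d)) ∂μ ≤
      ∫⁻ z in ball 0 r, ENNReal.ofReal (‖z‖ ^ (α - d)) ∂μ := by
    refine setLIntegral_le_setLIntegral_of_measure_eq (ENNReal.ofReal (r ^ (α - d))) hS
      measurableSet_ball hball.symm hS_fin (fun z hz ↦ ?_) ?_
    · have : r ≤ ‖z‖ := by simpa using hz.2
      exact ENNReal.ofReal_le_ofReal (Real.rpow_le_rpow_of_nonpos hr this (by linarith))
    -- `0 ^ (α - d) = 0` is a junk value, so the lower bound only holds away from the origin.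
    · filter_upwards [compl_mem_ae_iff.mpr (measure_singleton (μ := μ) 0)] with z hz0 hz
      have : ‖z‖ ≤ r := by simpa using (mem_ball_zero_iff.mp hz.1).le
      exact ENNReal.ofReal_le_ofReal
        (Real.rpow_le_rpow_of_nonpos (by simpa using hz0) this (by linarith))
  calc ∫ z in S, ‖z‖ ^ (α - d) ∂μ
      = (∫⁻ z in S, ENNReal.ofReal (‖z‖ ^ (α - d)) ∂μ).toReal :=
        integral_eq_lintegral_of_nonneg_ae (ae_of_all _ fun _ ↦ by positivity)
          hmeas.aestronglyMeasurable
    _ ≤ (∫⁻ z in ball 0 r, ENNReal.ofReal (‖z‖ ^ (α - d)) ∂μ).toReal :=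
        ENNReal.toReal_mono (integrableOn_ball_norm_rpow μ hα r).lintegral_lt_top.ne hmono
    _ = ∫ z in ball 0 r, ‖z‖ ^ (α - d) ∂μ :=
        (integral_eq_lintegral_of_nonneg_ae (ae_of_all _ fun _ ↦ by positivity)
          hmeas.aestronglyMeasurable).symm
    _ = d * ν * (r ^ α / α) := integral_ball_norm_rpow μ hα hr.le
    _ = _ := by
        rw [← Real.rpow_mul (by positivity), inv_mul_eq_div]
        ring

theorem stmt_0 (n : ℕ) (hn : 1 ≤ n) (α : ℝ) (hα : 0 < α) (hαn : α < n)
    (K : Set (EuclideanSpace ℝ (Fin n))) (hK : IsCompact K)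
    (x : EuclideanSpace ℝ (Fin n)) :
    (∫ y in K, ‖x - y‖ ^ (α - (n : ℝ))) ≤
      α⁻¹ * ((n : ℝ) * (volume (Metric.ball (0 : EuclideanSpace ℝ (Fin n)) 1)).toReal) *
        ((volume K).toReal /
            (volume (Metric.ball (0 : EuclideanSpace ℝ (Fin n)) 1)).toReal) ^ (α / n) := by
  have : Nontrivial (EuclideanSpace ℝ (Fin n)) :=
    Module.nontrivial_of_finrank_pos (R := ℝ) (by rwa [finrank_euclideanSpace_fin])
  have hsub : MeasurePreserving (x - ·) (volume : Measure (EuclideanSpace ℝ (Fin n))) volume :=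
    Measure.measurePreserving_sub_left volume x
  have hK_invol : (x - ·) ⁻¹' ((x - ·) ⁻¹' K) = K := by ext; simp
  have hK_pre : volume ((x - ·) ⁻¹' K) = volume K :=
    hsub.measure_preimage hK.measurableSet.nullMeasurableSet
  calc ∫ y in K, ‖x - y‖ ^ (α - n)
      = ∫ z in (x - ·) ⁻¹' K, ‖z‖ ^ (α - finrank ℝ (EuclideanSpace ℝ (Fin n))) := by
        conv_lhs => rw [← hK_invol]
        rw [finrank_euclideanSpace_fin]
        exact hsub.setIntegral_preimage_emb (Homeomorph.subLeft x).measurableEmbedding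
          (fun z : EuclideanSpace ℝ (Fin n) ↦ ‖z‖ ^ (α - n)) _
    _ ≤ _ := setIntegral_norm_rpow_le volume hα (by simpa using hαn.le)
        (hK.measurableSet.preimage hsub.measurable) (hK_pre ▸ hK.measure_lt_top.ne)
    _ = _ := by
        rw [finrank_euclideanSpace_fin,
          hsub.measureReal_preimage hK.measurableSet.nullMeasurableSet]
        rfl
end

section
/- Let $s \in (0,1)$, $p \in (1,\infty)$ with $sp < n$, and $\sigma > 0$ with $2\sigma + sp < n$. Set $f(r) = (1+r^2)^{(sp-n+\sigma)/(2(p-1))}$ for $r > 0$. Then for every $t \in (0,1)$ and $r \in (0,\infty)$, $t^{sp-n}\,\big(f(r) - f(r t^{-1})\big)^{p-1} > \big(f(rt) - f(r)\big)^{p-1}$. -/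
/-!
Write `f = g ∘ (1 + ·²)` with `g x = x ^ α`, `α = (sp - n + σ) / (2(p - 1)) < 0`, so `g` is
convex and decreasing on `(0, ∞)`. Since `t^{2α} f(r) = g(t²(1 + r²))` and
`t^{2α} f(r/t) = g(t² + r²)`, while the intervals `[t²(1 + r²), t² + r²]` and `[1 + r²t², 1 + r²]`
have the same length `r²(1 - t²)` and the second lies to the right of the first, convexity of `g`
gives `f(rt) - f(r) ≤ t^{2α} (f(r) - f(r/t))`. As `σ > 0`, `t^{2α} < t^{(sp - n)/(p - 1)}`, and
raising to the power `p - 1` gives the claim.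
-/

open Set

theorem convexOn_rpow_of_nonpos {p : ℝ} (hp : p ≤ 0) :
    ConvexOn ℝ (Ioi 0) fun x : ℝ ↦ x ^ p := by
  set g : ℝ → ℝ := fun x ↦ (-p) • -Real.log x
  have hg : ConvexOn ℝ (Ioi 0) g :=
    strictConcaveOn_log_Ioi.concaveOn.neg.smul (neg_nonneg.2 hp)
  have hg_cont : ContinuousOn g (Ioi 0) :=
    ((Real.continuousOn_log.mono fun x hx ↦ (mem_Ioi.1 hx).ne').neg.const_smul (-p) :)
  refine ((convexOn_exp.subset (subset_univ _) (isPreconnected_Ioi.image g hg_cont).convex).comp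
    hg (Real.exp_monotone.monotoneOn _)).congr fun x hx ↦ ?_
  simp [g, Real.rpow_def_of_pos (mem_Ioi.1 hx), mul_comm]

theorem ConvexOn.map_add_sub_le_map_add_sub {𝕜 : Type*} [Field 𝕜] [LinearOrder 𝕜]
    [IsStrictOrderedRing 𝕜] {s : Set 𝕜} {f : 𝕜 → 𝕜} (hf : ConvexOn 𝕜 s f) {x y d : 𝕜}
    (hx : x ∈ s) (hyd : y + d ∈ s) (hxy : x ≤ y) (hd : 0 ≤ d) :
    f (x + d) - f x ≤ f (y + d) - f y := by
  rcases hd.eq_or_lt with rfl | hd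
  · simp
  have hs := hf.1.ordConnected
  have hxd : x + d ∈ s := hs.out hx hyd ⟨by linarith, by linarith⟩
  have hy : y ∈ s := hs.out hx hyd ⟨hxy, by linarith⟩
  have h₁ := hf.secant_mono hx hxd hyd (by linarith) (by linarith) (by linarith)
  have h₂ := hf.secant_mono hyd hx hy (by linarith) (by linarith) hxy
  rw [add_sub_cancel_left] at h₁
  rw [sub_add_cancel_left, div_neg, ← neg_div, neg_sub, ← neg_div_neg_eq, neg_sub, neg_sub] at h₂
  rw [← div_le_div_iff_of_pos_right hd]
  linarith

theorem one_add_sq_rpow_lt_of_sq_lt {α x y : ℝ} (hα : α < 0) (h : x ^ 2 < y ^ 2) :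
    (1 + y ^ 2) ^ α < (1 + x ^ 2) ^ α :=
  Real.rpow_lt_rpow_of_neg (by positivity) (by linarith) hα

theorem one_add_sq_rpow_sub_le_rpow_mul {α t : ℝ} (hα : α ≤ 0) (ht₀ : 0 < t) (ht₁ : t ≤ 1)
    (r : ℝ) :
    (1 + (r * t) ^ 2) ^ α - (1 + r ^ 2) ^ α ≤
      t ^ (2 * α) * ((1 + r ^ 2) ^ α - (1 + (r * t⁻¹) ^ 2) ^ α) := by
  have ht2 : t ^ 2 ≤ 1 := pow_le_one₀ ht₀.le ht₁
  have key := (convexOn_rpow_of_nonpos hα).map_add_sub_le_map_add_sub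
    (x := t ^ 2 * (1 + r ^ 2)) (y := 1 + (r * t) ^ 2) (d := r ^ 2 * (1 - t ^ 2))
    (mem_Ioi.2 (by positivity)) (mem_Ioi.2 (by positivity)) (by nlinarith) (by nlinarith)
  have hx : t ^ 2 * (1 + r ^ 2) + r ^ 2 * (1 - t ^ 2) = t ^ 2 * (1 + (r * t⁻¹) ^ 2) := by
    field_simp; ring
  have hy : 1 + (r * t) ^ 2 + r ^ 2 * (1 - t ^ 2) = 1 + r ^ 2 := by ring
  have ht : (t ^ 2) ^ α = t ^ (2 * α) := by
    rw [← Real.rpow_natCast, ← Real.rpow_mul ht₀.le]; norm_num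
  rw [hx, hy, Real.mul_rpow (by positivity) (by positivity),
    Real.mul_rpow (by positivity) (by positivity), ht] at key
  linarith

theorem one_add_sq_rpow_sub_lt_rpow_mul {α β t r : ℝ} (hα : α < 0) (hβ : β < 2 * α)
    (ht₀ : 0 < t) (ht₁ : t < 1) (hr : r ≠ 0) :
    (1 + (r * t) ^ 2) ^ α - (1 + r ^ 2) ^ α <
      t ^ β * ((1 + r ^ 2) ^ α - (1 + (r * t⁻¹) ^ 2) ^ α) := by
  have hsq : r ^ 2 < (r * t⁻¹) ^ 2 := by
    rw [mul_pow]
    exact lt_mul_of_one_lt_right (by positivity)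
      (one_lt_pow₀ ((one_lt_inv₀ ht₀).2 ht₁) two_ne_zero)
  have hX := sub_pos.2 (one_add_sq_rpow_lt_of_sq_lt hα hsq)
  calc _ ≤ t ^ (2 * α) * ((1 + r ^ 2) ^ α - (1 + (r * t⁻¹) ^ 2) ^ α) :=
        one_add_sq_rpow_sub_le_rpow_mul hα.le ht₀ ht₁.le r
    _ < _ := mul_lt_mul_of_pos_right (Real.rpow_lt_rpow_of_exponent_gt ht₀ ht₁ hβ) hX

theorem stmt_13_general (n : ℕ) (s p σ : ℝ) (hp : 1 < p)
    (hσ : 0 < σ) (hσ' : 2 * σ + s * p < n)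
    (f : ℝ → ℝ) (hf : ∀ r : ℝ, f r = (1 + r ^ 2) ^ ((s * p - n + σ) / (2 * (p - 1))))
    (t r : ℝ) (ht : t ∈ Set.Ioo (0 : ℝ) 1) (hr : 0 < r) :
    t ^ (s * p - n) * (f r - f (r * t⁻¹)) ^ (p - 1) > (f (r * t) - f r) ^ (p - 1) := by
  obtain ⟨ht₀, ht₁⟩ := ht
  obtain rfl : f = fun r ↦ (1 + r ^ 2) ^ ((s * p - n + σ) / (2 * (p - 1))) := funext hf
  have hp₁ : 0 < p - 1 := sub_pos.2 hp
  have hα : (s * p - n + σ) / (2 * (p - 1)) < 0 :=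
    div_neg_of_neg_of_pos (by linarith) (by positivity)
  have hβ : (s * p - n) / (p - 1) < 2 * ((s * p - n + σ) / (2 * (p - 1))) := by
    rw [← mul_div_assoc, mul_div_mul_left _ _ two_ne_zero]
    exact div_lt_div_of_pos_right (by linarith) hp₁
  have hsq : (r * t) ^ 2 < r ^ 2 := by
    rw [mul_pow]
    exact mul_lt_of_lt_one_right (by positivity) (pow_lt_one₀ ht₀.le ht₁ two_ne_zero)
  have hY := sub_nonneg.2 (one_add_sq_rpow_lt_of_sq_lt hα hsq).le
  have key := one_add_sq_rpow_sub_lt_rpow_mul hα hβ ht₀ ht₁ hr.ne'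
  have hX := pos_of_mul_pos_right (hY.trans_lt key) (Real.rpow_nonneg ht₀.le _)
  calc _ < (t ^ ((s * p - n) / (p - 1)) * _) ^ (p - 1) := Real.rpow_lt_rpow hY key hp₁
    _ = _ := by
      rw [Real.mul_rpow (Real.rpow_nonneg ht₀.le _) hX.le, ← Real.rpow_mul ht₀.le,
        div_mul_cancel₀ _ hp₁.ne']

theorem stmt_13 (n : ℕ) (s p σ : ℝ) (hs : s ∈ Set.Ioo (0 : ℝ) 1) (hp : 1 < p)
    (hspn : s * p < n) (hσ : 0 < σ) (hσ' : 2 * σ + s * p < n)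
    (f : ℝ → ℝ) (hf : ∀ r : ℝ, f r = (1 + r ^ 2) ^ ((s * p - n + σ) / (2 * (p - 1))))
    (t r : ℝ) (ht : t ∈ Set.Ioo (0 : ℝ) 1) (hr : 0 < r) :
    t ^ (s * p - n) * (f r - f (r * t⁻¹)) ^ (p - 1) > (f (r * t) - f r) ^ (p - 1) :=
  stmt_13_general n s p σ hp hσ hσ' f hf t r ht hr
end
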